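/- arXiv:2503.06326 — 5 statements merged into one kernel-verified Lean document; each statement's English description precedes it below -/
import Mathlib

section
/- In any commutative ring, the κ-Pochhammer polynomials satisfy the product formula (t;κ)_i · (t;κ)_j = ∑_{l=0}^{min(i,j)} C(i,l) C(j,l) l! κ^l (t;κ)_{i+j-l}. -/
open Finset

/-- The κ-Pochhammer polynomial `(t;κ)_m = ∏_{r=1}^m (t-(r-1)κ)`. -/
def poch {R : Type*} [CommRing R] (κ t : R) (m : ℕ) : R :=
  ∏ i ∈ Finset.range m, (t - (i : R) * κ)

lemma poch_succ {R : Type*} [CommRing R] (κ t : R) (m : ℕ) :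
    poch κ t (m + 1) = poch κ t m * (t - (m : R) * κ) :=
  Finset.prod_range_succ _ _

lemma choose_rec (i j l : ℕ) :
    i.choose (l+1) * (j+1).choose (l+1) * (l+1).factorial
      = i.choose (l+1) * j.choose (l+1) * (l+1).factorial
        + i.choose l * j.choose l * l.factorial * (i - l) := by
  have e := Nat.choose_succ_right_eq i l
  calc i.choose (l+1) * (j+1).choose (l+1) * (l+1).factorial
      = i.choose (l+1) * j.choose (l+1) * (l+1).factorial
        + (i.choose (l+1) * (l+1)) * (j.choose l * l.factorial) := by
          rw [Nat.choose_succ_succ, Nat.factorial_succ]; ring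
    _ = _ := by rw [e]; ring

lemma pochhammer_mul_aux {R : Type*} [CommRing R] (κ t : R) (i j : ℕ) :
    poch κ t i * poch κ t j =
      ∑ l ∈ Finset.range (j + 1),
        (i.choose l : R) * (j.choose l : R) * (l.factorial : R) * κ ^ l *
          poch κ t (i + j - l) := by
  induction j with
  | zero => simp [poch]
  | succ j ih =>
    set g : ℕ → R := fun l =>
      (i.choose l : R) * (j.choose l : R) * (l.factorial : R) * κ ^ l *
        poch κ t (i + j - l + 1) with hg
    set hh : ℕ → R := fun l =>
      (i.choose l : R) * (j.choose l : R) * (l.factorial : R) * ((i - l : ℕ) : R) *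
        κ ^ (l + 1) * poch κ t (i + j - l) with hhh
    set T : ℕ → R := fun l =>
      (i.choose l : R) * ((j+1).choose l : R) * (l.factorial : R) * κ ^ l *
        poch κ t (i + (j+1) - l) with hT
    have key : ∀ l ∈ Finset.range (j+1),
        (i.choose l : R) * (j.choose l : R) * (l.factorial : R) * κ ^ l *
          poch κ t (i + j - l) * (t - (j : R) * κ) = g l + hh l := by
      intro l hl
      rw [Finset.mem_range, Nat.lt_succ_iff] at hl
      rcases le_or_gt l i with h | h
      · simp only [hg, hhh, poch_succ]
        have h1 : ((i + j - l : ℕ) : R) = (i : R) + (j : R) - (l : R) := by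
          have hle : l ≤ i + j := le_trans h (Nat.le_add_right _ _)
          push_cast [Nat.cast_sub hle]; ring
        have h2 : ((i - l : ℕ) : R) = (i : R) - (l : R) := Nat.cast_sub h
        rw [h1, h2]; ring
      · have hz : i.choose l = 0 := Nat.choose_eq_zero_of_lt h
        simp [hg, hhh, hz]
    have step : ∀ l ∈ Finset.range (j+1), g (l+1) + hh l = T (l+1) := by
      intro l hl
      rw [Finset.mem_range, Nat.lt_succ_iff] at hl
      rcases lt_or_ge l (i + j) with h | h
      · have harg1 : i + j - (l+1) + 1 = i + j - l := by omega
        have harg2 : i + (j+1) - (l+1) = i + j - l := by omega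
        simp only [hg, hhh, hT, harg1, harg2]
        have hc := choose_rec i j l
        have hcR : (i.choose (l+1) : R) * ((j+1).choose (l+1) : R) * ((l+1).factorial : R)
            = (i.choose (l+1) : R) * (j.choose (l+1) : R) * ((l+1).factorial : R)
              + (i.choose l : R) * (j.choose l : R) * (l.factorial : R) * ((i - l : ℕ) : R) := by
          exact_mod_cast congrArg (Nat.cast : ℕ → R) hc
        calc (i.choose (l+1) : R) * (j.choose (l+1) : R) * ((l+1).factorial : R) * κ ^ (l+1) *
                poch κ t (i + j - l)
              + (i.choose l : R) * (j.choose l : R) * (l.factorial : R) * ((i - l : ℕ) : R) *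
                κ ^ (l+1) * poch κ t (i + j - l)
            = ((i.choose (l+1) : R) * (j.choose (l+1) : R) * ((l+1).factorial : R)
              + (i.choose l : R) * (j.choose l : R) * (l.factorial : R) * ((i - l : ℕ) : R))
              * (κ ^ (l+1) * poch κ t (i + j - l)) := by ring
          _ = _ := by rw [← hcR]; ring
      · -- l ≥ i + j, with l ≤ j forces i = 0 and l = j; all terms vanish
        have hi0 : i = 0 := by omega
        have hlj : l = j := by omega
        have hz : i.choose (l+1) = 0 := by
          rw [hi0]; exact Nat.choose_eq_zero_of_lt (Nat.succ_pos l)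
        have hz2 : i - l = 0 := by omega
        simp [hg, hhh, hT, hz, hz2]
    rw [poch_succ, ← mul_assoc, ih, Finset.sum_mul, Finset.sum_congr rfl key,
      Finset.sum_add_distrib]
    have hgsum : ∑ l ∈ Finset.range (j+1), g l
        = g 0 + ∑ l ∈ Finset.range (j+1), g (l+1) := by
      have h1 : ∑ l ∈ Finset.range (j+2), g l
          = ∑ l ∈ Finset.range (j+1), g (l+1) + g 0 := Finset.sum_range_succ' g (j+1)
      have h2 : ∑ l ∈ Finset.range (j+2), g l
          = ∑ l ∈ Finset.range (j+1), g l + g (j+1) := Finset.sum_range_succ g (j+1)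
      have h3 : g (j+1) = 0 := by
        simp [hg, Nat.choose_eq_zero_of_lt (Nat.lt_succ_self j)]
      rw [h3, add_zero] at h2
      rw [← h2, h1]; ring
    have hTsum : ∑ l ∈ Finset.range (j+2), T l
        = ∑ l ∈ Finset.range (j+1), T (l+1) + T 0 := Finset.sum_range_succ' T (j+1)
    have hT0 : T 0 = g 0 := by simp [hg, hT, ← add_assoc]
    have hstep : ∑ l ∈ Finset.range (j+1), g (l+1) + ∑ l ∈ Finset.range (j+1), hh l
        = ∑ l ∈ Finset.range (j+1), T (l+1) := by
      rw [← Finset.sum_add_distrib]; exact Finset.sum_congr rfl step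
    rw [hgsum, hTsum, hT0, ← hstep]
    ring

theorem pochhammer_mul {R : Type*} [CommRing R] (κ t : R) (i j : ℕ) :
    poch κ t i * poch κ t j =
      ∑ l ∈ Finset.range (min i j + 1),
        (i.choose l : R) * (j.choose l : R) * (l.factorial : R) * κ ^ l *
          poch κ t (i + j - l) := by
  rw [pochhammer_mul_aux]
  refine (Finset.sum_subset ?_ ?_).symm
  · exact Finset.range_subset_range.mpr (by omega)
  · intro x hx hx'
    rw [Finset.mem_range] at hx
    rw [Finset.mem_range] at hx'
    have hix : i < x := by omega
    simp [Nat.choose_eq_zero_of_lt hix]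
end

section
/- Let p be a prime and a a nonnegative integer. In a field of characteristic p, the κ-Pochhammer polynomial of length pa satisfies (t;κ)_{pa} = (t^p - κ^{p-1} t)^a for all t, κ. -/
open Finset

open Polynomial in
lemma zmod_prod_X_sub_C (p : ℕ) [Fact p.Prime] :
    ∏ x : ZMod p, (X - C x) = X ^ p - X := by
  have hp1 : 1 < p := (Fact.out : p.Prime).one_lt
  have hmonic : (X ^ p - X : (ZMod p)[X]).Monic := by
    apply monic_X_pow_sub
    calc (X : (ZMod p)[X]).degree ≤ 1 := degree_X_le
      _ < (p : WithBot ℕ) := by exact_mod_cast hp1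
  have hdeg : (X ^ p - X : (ZMod p)[X]).natDegree = p := by
    simpa [ZMod.card p] using
      FiniteField.X_pow_card_sub_X_natDegree_eq (ZMod p) (by simpa [ZMod.card p] using hp1)
  have hroots : (X ^ p - X : (ZMod p)[X]).roots = Finset.univ.val := by
    simpa [ZMod.card p] using FiniteField.roots_X_pow_card_sub_X (ZMod p)
  have hcard : Multiset.card (X ^ p - X : (ZMod p)[X]).roots
      = (X ^ p - X : (ZMod p)[X]).natDegree := by
    rw [hroots, hdeg]
    simpa using (ZMod.card p)
  have h := prod_multiset_X_sub_C_of_monic_of_roots_card_eq hmonic hcard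
  rw [hroots] at h
  rw [← h]
  rfl

lemma prod_range_sub_cast {p : ℕ} [Fact p.Prime] {K : Type*} [Field K] [CharP K p]
    (s : K) : ∏ i ∈ Finset.range p, (s - (i : K)) = s ^ p - s := by
  have hcast : ∀ i : ℕ, (ZMod.cast (i : ZMod p) : K) = (i : K) := fun i => by
    rw [← ZMod.castHom_apply (h := dvd_rfl), map_natCast]
  have hreindex : ∏ i ∈ Finset.range p, (s - (i : K))
      = ∏ x : ZMod p, (s - (ZMod.cast x : K)) := by
    refine Finset.prod_nbij' (fun i : ℕ => ((i : ZMod p))) (fun x : ZMod p => x.val) ?_ ?_ ?_ ?_ ?_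
    · intro i _; exact Finset.mem_univ _
    · intro x _; exact Finset.mem_range.mpr (ZMod.val_lt x)
    · intro i hi
      exact ZMod.val_natCast_of_lt (Finset.mem_range.mp hi)
    · intro x _; exact ZMod.natCast_zmod_val x
    · intro i _
      rw [hcast]
  rw [hreindex]
  have hmap := congrArg (Polynomial.map (ZMod.castHom dvd_rfl K)) (zmod_prod_X_sub_C p)
  have h := congrArg (Polynomial.eval s) hmap
  simp only [Polynomial.map_prod, Polynomial.map_sub, Polynomial.map_pow, Polynomial.map_X,
    Polynomial.map_C, Polynomial.eval_prod, Polynomial.eval_sub, Polynomial.eval_pow,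
    Polynomial.eval_X, Polynomial.eval_C, ZMod.castHom_apply] at h
  exact h

lemma poch_p {p : ℕ} [Fact p.Prime] {K : Type*} [Field K] [CharP K p]
    (κ t : K) : poch κ t p = t ^ p - κ ^ (p - 1) * t := by
  have hp1 : 1 < p := (Fact.out : p.Prime).one_lt
  rcases eq_or_ne κ 0 with hκ | hκ
  · simp [poch, hκ, Finset.prod_const, zero_pow (by omega : p - 1 ≠ 0)]
  · have key := prod_range_sub_cast (p := p) (t / κ)
    have hmain : poch κ t p = κ ^ p * ∏ i ∈ Finset.range p, (t / κ - (i : K)) := by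
      calc poch κ t p = ∏ i ∈ Finset.range p, (κ * (t / κ - (i : K))) := by
            refine Finset.prod_congr rfl fun i _ => ?_
            field_simp
        _ = κ ^ p * ∏ i ∈ Finset.range p, (t / κ - (i : K)) := by
            rw [Finset.prod_mul_distrib, Finset.prod_const, Finset.card_range]
    have h1 : κ ^ p * (t / κ) ^ p = t ^ p := by
      rw [← mul_pow, mul_div_cancel₀ _ hκ]
    have h2 : κ ^ p * (t / κ) = κ ^ (p - 1) * t := by
      have hκp : κ ^ p = κ ^ (p - 1) * κ := by
        conv_lhs => rw [show p = (p - 1) + 1 by omega]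
        rw [pow_succ]
      rw [hκp, mul_assoc, mul_comm κ (t / κ), div_mul_cancel₀ t hκ]
    rw [hmain, key, mul_sub, h1, h2]
  
theorem pochhammer_p_mul {p : ℕ} [Fact p.Prime] {K : Type*} [Field K] [CharP K p]
    (a : ℕ) (κ t : K) : poch κ t (p * a) = (t ^ p - κ ^ (p - 1) * t) ^ a := by
  induction a with
  | zero => simp [poch]
  | succ a ih =>
    have : p * (a + 1) = p * a + p := by ring
    rw [this]
    unfold poch at ih ⊢
    rw [Finset.prod_range_add, ih, pow_succ]
    congr 1
    rw [← poch_p (p := p) κ t]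
    unfold poch
    refine Finset.prod_congr rfl fun i _ => ?_
    have : ((p * a + i : ℕ) : K) = (i : K) := by
      push_cast
      rw [CharP.cast_eq_zero K p]
      ring
    rw [this]
end

section
/- Let p be a prime and K a field of characteristic p. A polynomial f ∈ K[t] satisfies f(t - 1) = f(t) (as polynomials) if and only if f is a polynomial in t^p - t, i.e., f lies in the subring K[t^p - t]. -/
/-!
Substituting `t ↦ t - 1` fixes `t ^ p - t` because `(t - 1) ^ p = t ^ p - 1` in characteristic `p`,
so it fixes all of `K[t ^ p - t]`. Conversely, a periodic polynomial takes the same value at the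
`p` distinct points `0, 1, …, p - 1`, so if its degree is below `p` it is constant. Division with
remainder by the monic `t ^ p - t` commutes with the substitution, so a periodic `f` is
`r + (t ^ p - t) q` with `r` periodic of degree `< p`, hence constant, and `q` periodic of smaller
degree; induction on the degree concludes.
-/

open Polynomial

namespace Polynomial

variable {R : Type*} [CommRing R]

section XPowSubX

variable [Nontrivial R] {n : ℕ}

theorem degree_X_lt_degree_X_pow (hn : 1 < n) : (X : R[X]).degree < (X ^ n : R[X]).degree := by
  rw [degree_X_pow, degree_X]
  exact mod_cast hn

theorem monic_X_pow_sub_X (hn : 1 < n) : (X ^ n - X : R[X]).Monic :=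
  monic_X_pow_sub (degree_X_lt_degree_X_pow hn |>.trans_eq (degree_X_pow n))

theorem natDegree_X_pow_sub_X (hn : 1 < n) : (X ^ n - X : R[X]).natDegree = n := by
  rw [natDegree_eq_of_degree_eq (degree_sub_eq_left_of_degree_lt (degree_X_lt_degree_X_pow hn)),
    natDegree_X_pow]

end XPowSubX

theorem X_pow_sub_X_comp_X_sub_one (p : ℕ) [Fact p.Prime] [CharP R p] :
    (X ^ p - X : R[X]).comp (X - 1) = X ^ p - X := by
  rw [sub_comp, pow_comp, X_comp, sub_pow_char, one_pow]
  ring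

theorem comp_eq_of_mem_adjoin {f g q : R[X]} (hgq : g.comp q = g)
    (hf : f ∈ Algebra.adjoin R {g}) : f.comp q = f := by
  have hle : Algebra.adjoin R {g} ≤ AlgHom.equalizer (aeval q) (AlgHom.id R R[X]) :=
    Algebra.adjoin_le (Set.singleton_subset_iff.mpr hgq)
  exact hle hf

theorem divByMonic_comp_and_modByMonic_comp [NoZeroDivisors R] {f g q : R[X]} (hg : g.Monic)
    (hgq : g.comp q = g) (hq : q.degree = 1) :
    f.comp q /ₘ g = (f /ₘ g).comp q ∧ f.comp q %ₘ g = (f %ₘ g).comp q := by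
  nontriviality R
  refine div_modByMonic_unique _ _ hg ⟨?_, ?_⟩
  · conv_rhs => rw [← modByMonic_add_div f g]
    rw [add_comp, mul_comp, hgq]
  · rw [degree_comp (hq ▸ zero_lt_one), hq, mul_one]
    exact degree_modByMonic_lt f hg

theorem mem_adjoin_of_comp_eq [NoZeroDivisors R] {g q : R[X]} (hg : g.Monic)
    (hg0 : 0 < g.natDegree) (hgq : g.comp q = g) (hq : q.degree = 1)
    (hconst : ∀ r : R[X], r.comp q = r → r.natDegree < g.natDegree → r.natDegree = 0)
    {f : R[X]} (hf : f.comp q = f) : f ∈ Algebra.adjoin R {g} := by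
  have mem_of_natDegree_eq_zero {r : R[X]} (hr : r.natDegree = 0) : r ∈ Algebra.adjoin R {g} :=
    eq_C_of_natDegree_eq_zero hr ▸ Subalgebra.algebraMap_mem _ _
  induction hn : f.natDegree using Nat.strong_induction_on generalizing f with
  | _ n ih =>
    by_cases hlt : f.natDegree < g.natDegree
    · exact mem_of_natDegree_eq_zero (hconst f hf hlt)
    obtain ⟨hdiv, hmod⟩ := divByMonic_comp_and_modByMonic_comp (f := f) hg hgq hq
    rw [hf] at hdiv hmod
    have hg1 : g ≠ 1 := fun h ↦ by simp [h] at hg0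
    have hmod_lt : (f %ₘ g).natDegree < g.natDegree := natDegree_modByMonic_lt f hg hg1
    have hdiv_lt : (f /ₘ g).natDegree < n := by
      rw [natDegree_divByMonic f hg]
      omega
    rw [← modByMonic_add_div f g]
    exact add_mem (mem_of_natDegree_eq_zero (hconst _ hmod.symm hmod_lt))
      (mul_mem (Algebra.subset_adjoin rfl) (ih _ hdiv_lt hdiv.symm rfl))

theorem eval_natCast_eq_eval_zero_of_comp_X_sub_one_eq {f : R[X]} (hf : f.comp (X - 1) = f)
    (n : ℕ) : f.eval (n : R) = f.eval 0 := by
  induction n with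
  | zero => rw [Nat.cast_zero]
  | succ n ih =>
    rw [← ih, ← hf, eval_comp, eval_sub, eval_X, eval_one, Nat.cast_succ, add_sub_cancel_right, hf]

theorem eq_C_of_comp_X_sub_one_eq_of_natDegree_lt [IsDomain R] {p : ℕ} [CharP R p] {f : R[X]}
    (hf : f.comp (X - 1) = f) (hdeg : f.natDegree < p) : f = C (f.eval 0) := by
  have hinj : Function.Injective fun i : Fin p ↦ ((i : ℕ) : R) := fun i j hij ↦
    Fin.ext <| ((CharP.natCast_eq_natCast R p).mp hij).eq_of_lt_of_lt i.isLt j.isLt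
  refine sub_eq_zero.mp (eq_zero_of_natDegree_lt_card_of_eval_eq_zero _ hinj (fun i ↦ ?_) ?_)
  · rw [eval_sub, eval_C, eval_natCast_eq_eval_zero_of_comp_X_sub_one_eq hf, sub_self]
  · rw [Fintype.card_fin]
    exact (natDegree_sub_le _ _).trans_lt (by simpa using hdeg)

end Polynomial

theorem periodic_iff_mem_adjoin {p : ℕ} [Fact p.Prime] {K : Type*} [Field K] [CharP K p]
    (f : K[X]) :
    f.comp (X - 1) = f ↔ f ∈ Algebra.adjoin K ({X ^ p - X} : Set K[X]) := by
  have hp : 1 < p := (Fact.out : p.Prime).one_lt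
  have hdeg : (X ^ p - X : K[X]).natDegree = p := natDegree_X_pow_sub_X hp
  have hfix := X_pow_sub_X_comp_X_sub_one (R := K) p
  have hX1 : (X - 1 : K[X]).degree = 1 := by simpa using degree_X_sub_C (1 : K)
  constructor
  · refine fun hf ↦ mem_adjoin_of_comp_eq (monic_X_pow_sub_X hp) (by omega) hfix hX1
      (fun r hr hr_lt ↦ ?_) hf
    rw [eq_C_of_comp_X_sub_one_eq_of_natDegree_lt hr (hdeg ▸ hr_lt), natDegree_C]
  · exact comp_eq_of_mem_adjoin hfix
end

section
/- Let p be a prime, K a field of characteristic p, and κ ∈ K with κ ≠ 0. A polynomial f ∈ K[t] satisfies f(t - κ) = f(t) if and only if f lies in the subring K[t^p - κ^{p-1} t]. -/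
/-!
The shift `f ↦ f.comp (X - C κ)` is an algebra endomorphism of `K[X]`, and by the Frobenius
`X ^ p - κ ^ (p - 1) X` is invariant under it. Since the shift preserves degrees, uniqueness of
division with remainder by this monic polynomial makes the quotient and the remainder of an
invariant polynomial invariant again. An invariant polynomial of degree `< p` takes the same value
at the `p` distinct points `0, κ, …, (p - 1) κ`, so it is constant; induction on the degree ends the
proof.
-/

open Polynomial

namespace Polynomial

section ShiftInvariants

variable {R : Type*} [CommRing R]

noncomputable def shiftInvariants (κ : R) : Subalgebra R R[X] :=
  AlgHom.equalizer (aeval (X - C κ)) (AlgHom.id R R[X])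

theorem mem_shiftInvariants {κ : R} {f : R[X]} :
    f ∈ shiftInvariants κ ↔ f.comp (X - C κ) = f :=
  AlgHom.mem_equalizer _ _ f

theorem degree_comp_X_sub_C (f : R[X]) (κ : R) : (f.comp (X - C κ)).degree = f.degree := by
  rw [sub_eq_add_neg, ← C_neg, ← taylor_apply, degree_taylor]

theorem eval_natCast_mul_of_mem_shiftInvariants {κ : R} {f : R[X]} (hf : f ∈ shiftInvariants κ)
    (n : ℕ) : f.eval (n * κ) = f.eval 0 := by
  induction n with
  | zero => simp
  | succ n ih =>
    conv_lhs => rw [← mem_shiftInvariants.mp hf]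
    simp [eval_comp, add_mul, ih]

theorem divByMonic_and_modByMonic_mem_shiftInvariants {κ : R} {f g : R[X]} (hg : g.Monic)
    (hg_inv : g ∈ shiftInvariants κ) (hf : f ∈ shiftInvariants κ) :
    f /ₘ g ∈ shiftInvariants κ ∧ f %ₘ g ∈ shiftInvariants κ := by
  nontriviality R
  have hdiv : (f %ₘ g).comp (X - C κ) + g * (f /ₘ g).comp (X - C κ) = f := by
    conv_rhs => rw [← mem_shiftInvariants.mp hf, ← modByMonic_add_div f g]
    rw [add_comp, mul_comp, mem_shiftInvariants.mp hg_inv]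
  have hdeg : ((f %ₘ g).comp (X - C κ)).degree < g.degree := by
    rw [degree_comp_X_sub_C]
    exact degree_modByMonic_lt f hg
  obtain ⟨hq, hr⟩ := div_modByMonic_unique _ _ hg ⟨hdiv, hdeg⟩
  exact ⟨mem_shiftInvariants.mpr hq.symm, mem_shiftInvariants.mpr hr.symm⟩

theorem shiftInvariants_le_adjoin {κ : R} {g : R[X]} (hg : g.Monic) (hg_pos : 0 < g.natDegree)
    (hg_inv : g ∈ shiftInvariants κ)
    (hconst : ∀ r ∈ shiftInvariants κ, r.natDegree < g.natDegree → r ∈ (⊥ : Subalgebra R R[X])) :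
    shiftInvariants κ ≤ Algebra.adjoin R {g} := by
  intro f hf
  induction hn : f.natDegree using Nat.strong_induction_on generalizing f with
  | _ n ih =>
    by_cases hlt : n < g.natDegree
    · exact SetLike.le_def.mp bot_le (hconst f hf (hn ▸ hlt))
    obtain ⟨hq, hr⟩ := divByMonic_and_modByMonic_mem_shiftInvariants hg hg_inv hf
    have hq_deg : (f /ₘ g).natDegree < n := by
      rw [natDegree_divByMonic f hg]
      omega
    have hr_deg : (f %ₘ g).natDegree < g.natDegree :=
      natDegree_modByMonic_lt f hg (by rintro rfl; simp at hg_pos)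
    rw [← modByMonic_add_div f g]
    exact add_mem (SetLike.le_def.mp bot_le (hconst _ hr hr_deg))
      (mul_mem (Algebra.subset_adjoin rfl) (ih _ hq_deg hq rfl))

end ShiftInvariants

section CharP

variable {R : Type*} [CommRing R] {p : ℕ}

theorem eq_C_of_mem_shiftInvariants_of_natDegree_lt [IsDomain R] [CharP R p] {κ : R} (hκ : κ ≠ 0)
    {f : R[X]} (hf : f ∈ shiftInvariants κ) (hdeg : f.natDegree < p) : f = C (f.eval 0) := by
  have hinj : Function.Injective fun i : Fin p ↦ ((i : ℕ) : R) * κ := fun i j hij ↦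
    Fin.ext <| CharP.natCast_injOn_Iio R p i.isLt j.isLt (mul_right_cancel₀ hκ hij)
  refine eq_of_natDegree_lt_card_of_eval_eq _ _ hinj (fun i ↦ ?_) ?_
  · rw [eval_C, eval_natCast_mul_of_mem_shiftInvariants hf]
  · simpa using hdeg

/-- In characteristic `p` this is the Pochhammer product `X (X - κ) ⋯ (X - (p - 1) κ)`. -/
noncomputable def shiftPochhammer (p : ℕ) (κ : R) : R[X] := X ^ p - C (κ ^ (p - 1)) * X

theorem shiftPochhammer_monic (hp : 1 < p) (κ : R) : (shiftPochhammer p κ).Monic :=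
  monic_X_pow_sub <| (degree_C_mul_X_le _).trans_lt (by exact_mod_cast hp)

theorem natDegree_shiftPochhammer [Nontrivial R] (hp : 1 < p) (κ : R) :
    (shiftPochhammer p κ).natDegree = p := by
  have hlt : (C (κ ^ (p - 1)) * X).natDegree < (X ^ p : R[X]).natDegree := by
    rw [natDegree_X_pow]
    exact (natDegree_C_mul_le _ _).trans_lt (natDegree_X_le.trans_lt hp)
  rw [shiftPochhammer, natDegree_sub_eq_left_of_natDegree_lt hlt, natDegree_X_pow]

theorem shiftPochhammer_mem_shiftInvariants [CharP R p] [Fact p.Prime] (κ : R) :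
    shiftPochhammer p κ ∈ shiftInvariants κ := by
  have hκp : (C κ : R[X]) ^ p = C (κ ^ (p - 1)) * C κ := by
    rw [← C_pow, ← C_mul, ← pow_succ, Nat.sub_add_cancel (Fact.out : p.Prime).one_le]
  rw [mem_shiftInvariants, shiftPochhammer, sub_comp, pow_comp, X_comp, mul_comp, C_comp, X_comp,
    sub_pow_char, hκp]
  ring

theorem shiftInvariants_eq_adjoin_shiftPochhammer [IsDomain R] [CharP R p] [Fact p.Prime]
    {κ : R} (hκ : κ ≠ 0) : shiftInvariants κ = Algebra.adjoin R {shiftPochhammer p κ} := by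
  have hp : 1 < p := (Fact.out : p.Prime).one_lt
  refine le_antisymm (shiftInvariants_le_adjoin (shiftPochhammer_monic hp κ) ?_
    (shiftPochhammer_mem_shiftInvariants κ) fun r hr hdeg ↦ ?_) (Algebra.adjoin_le ?_)
  · rw [natDegree_shiftPochhammer hp]
    omega
  · rw [eq_C_of_mem_shiftInvariants_of_natDegree_lt hκ hr (natDegree_shiftPochhammer hp κ ▸ hdeg)]
    exact Subalgebra.algebraMap_mem ⊥ _
  · exact Set.singleton_subset_iff.mpr (shiftPochhammer_mem_shiftInvariants κ)

end CharP

end Polynomial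

theorem quasi_constant_iff_mem_adjoin {p : ℕ} [Fact p.Prime] {K : Type*} [Field K] [CharP K p]
    (κ : K) (hκ : κ ≠ 0) (f : K[X]) :
    f.comp (X - C κ) = f ↔
      f ∈ Algebra.adjoin K ({X ^ p - C (κ ^ (p - 1)) * X} : Set K[X]) := by
  rw [← mem_shiftInvariants, shiftInvariants_eq_adjoin_shiftPochhammer hκ]
  rfl
end

section
/- Let I ⊂ {1,…,n} be a nonempty subset, I = {i_1 < ⋯ < i_a}. Substitute z_{i_b} = ((b-1)k - 1)κ for b = 1,…,a into the vector of polynomials Q(t,z;κ). Then the resulting vector is divisible by the Pochhammer polynomial (t;κ)_{ak-1}: Q(t,z;κ)|_{S_I} = (t;κ)_{ak-1} · (P_1(t,z),…,P_n(t,z)) for suitable polynomials P_j of degree (n-a)k in t. -/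
open Finset Polynomial

/-- The weight polynomial
`Q_c(t,z;κ) = (∏_{j<c}(t-z_j-κ;κ)_k)·(t-z_c-κ;κ)_{k-1}·(∏_{j>c}(t-z_j;κ)_k)`
as an element of `K[z_1,…,z_n][t]`. -/
noncomputable def Qpoly {K : Type*} [Field K] (n k : ℕ) (κ : K) (c : Fin n) :
    Polynomial (MvPolynomial (Fin n) K) :=
  (∏ j ∈ univ.filter (· < c),
      poch (Polynomial.C (MvPolynomial.C κ))
        (Polynomial.X - Polynomial.C (MvPolynomial.X j) -
          Polynomial.C (MvPolynomial.C κ)) k) *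
    poch (Polynomial.C (MvPolynomial.C κ))
      (Polynomial.X - Polynomial.C (MvPolynomial.X c) -
        Polynomial.C (MvPolynomial.C κ)) (k - 1) *
    ∏ j ∈ univ.filter (fun j => c < j),
      poch (Polynomial.C (MvPolynomial.C κ))
        (Polynomial.X - Polynomial.C (MvPolynomial.X j)) k

section helpers

variable {M : Type*} [CommRing M]

lemma prod_nested (h : ℕ → M) (m k : ℕ) :
    ∏ b ∈ range m, ∏ i ∈ range k, h (b * k + i) = ∏ l ∈ range (m * k), h l := by
  induction m with
  | zero => simp
  | succ m ih =>
    rw [Finset.prod_range_succ, ih, Nat.succ_mul, Finset.prod_range_add]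

lemma prod_nested' (f : ℤ → M) (m k : ℕ) :
    ∏ b ∈ range m, ∏ i ∈ range k, f ((b : ℤ) * k + i) = ∏ l ∈ range (m * k), f l := by
  rw [← prod_nested (fun l => f l) m k]
  refine prod_congr rfl fun b _ => prod_congr rfl fun i _ => ?_
  congr 1
  all_goals (push_cast; try ring)

lemma key1 (f : ℤ → M) (k a s : ℕ) (hk : 0 < k) (hs : s < a) :
    (∏ m ∈ range s, ∏ i ∈ range k, f ((m : ℤ) * k + i)) *
      ((∏ j ∈ range (a - s - 1), ∏ i ∈ range k, f (((s : ℤ) + 1 + j) * k + i - 1)) *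
        (∏ i ∈ range (k - 1), f ((s : ℤ) * k + i))) =
    ∏ m ∈ range (a * k - 1), f m := by
  have hk1 : 1 ≤ k := hk
  obtain ⟨d, rfl⟩ : ∃ d, a = s + 1 + d := ⟨a - s - 1, by omega⟩
  simp only [show s + 1 + d - s - 1 = d by omega]
  have h1 : (s + 1 + d) * k - 1 = s * k + ((k - 1) + d * k) := by
    rw [show (s + 1 + d) * k = s * k + k + d * k by ring]
    generalize s * k = A; generalize d * k = B
    omega
  have hA : ∏ m ∈ range s, ∏ i ∈ range k, f ((m : ℤ) * k + i) = ∏ m ∈ range (s * k), f m :=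
    prod_nested' f s k
  have hB : ∏ j ∈ range d, ∏ i ∈ range k, f (((s : ℤ) + 1 + j) * k + i - 1)
      = ∏ x ∈ range (d * k), f ((s * k + ((k - 1) + x) : ℕ)) := by
    rw [← prod_nested (fun l => f ((s * k + ((k - 1) + l) : ℕ))) d k]
    refine prod_congr rfl fun j _ => prod_congr rfl fun i _ => ?_
    congr 1
    all_goals (push_cast [Nat.cast_sub hk1]; try ring)
  have hC : ∏ i ∈ range (k - 1), f ((s : ℤ) * k + i)
      = ∏ x ∈ range (k - 1), f ((s * k + x : ℕ)) := by
    refine prod_congr rfl fun i _ => ?_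
    congr 1
    all_goals (push_cast; try ring)
  rw [hA, hB, hC, h1, Finset.prod_range_add, Finset.prod_range_add]
  ring

lemma key2 (f : ℤ → M) (k a s : ℕ) (hk : 0 < k) (ha : 0 < a) (hs : s ≤ a) :
    (∏ m ∈ range s, ∏ i ∈ range k, f ((m : ℤ) * k + i)) *
      (∏ j ∈ range (a - s), ∏ i ∈ range k, f (((s : ℤ) + j) * k + i - 1)) =
    f ((s : ℤ) * k - 1) * ∏ m ∈ range (a * k - 1), f m := by
  have hk1 : 1 ≤ k := hk
  rcases eq_or_lt_of_le hs with rfl | hs'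
  · have hsk : 1 ≤ s * k := Nat.one_le_iff_ne_zero.2 (Nat.mul_ne_zero (by omega) (by omega))
    simp only [Nat.sub_self, range_zero, prod_empty, mul_one]
    rw [prod_nested' f s k, (Nat.sub_add_cancel hsk).symm.trans rfl
        , Finset.prod_range_succ, mul_comm]
    congr 1
    all_goals (push_cast [Nat.cast_sub hsk]; try ring)
  · obtain ⟨d, rfl⟩ : ∃ d, a = s + (d + 1) := ⟨a - s - 1, by omega⟩
    simp only [show s + (d + 1) - s = d + 1 by omega]
    have hdk : 1 ≤ (d + 1) * k := Nat.one_le_iff_ne_zero.2 (Nat.mul_ne_zero (by omega) (by omega))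
    have hB : ∏ j ∈ range (d + 1), ∏ i ∈ range k, f (((s : ℤ) + j) * k + i - 1)
        = ∏ l ∈ range ((d + 1) * k), f ((s : ℤ) * k - 1 + l) := by
      rw [← prod_nested (fun l => f ((s : ℤ) * k - 1 + l)) (d + 1) k]
      refine prod_congr rfl fun j _ => prod_congr rfl fun i _ => ?_
      congr 1
      all_goals (push_cast; try ring)
    rw [hB, (Nat.sub_add_cancel hdk).symm, Finset.prod_range_succ', prod_nested' f s k]
    have h1 : (s + (d + 1)) * k - 1 = s * k + ((d + 1) * k - 1) := by
      rw [show (s + (d + 1)) * k = s * k + (d + 1) * k by ring]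
      generalize s * k = A; generalize hq : (d + 1) * k = B
      omega
    rw [h1, Finset.prod_range_add]
    have hE : f ((s : ℤ) * k - 1 + ((0 : ℕ) : ℤ)) = f ((s : ℤ) * k - 1) := by norm_num
    have hS : ∏ l ∈ range ((d + 1) * k - 1), f ((s : ℤ) * k - 1 + ((l + 1 : ℕ) : ℤ))
        = ∏ l ∈ range ((d + 1) * k - 1), f ((s * k + l : ℕ)) := by
      refine prod_congr rfl fun l _ => ?_
      congr 1
      all_goals (push_cast; try ring)
    rw [hE, hS]
    ring

end helpers

section pochlems

lemma ringHom_poch {R S : Type*} [CommRing R] [CommRing S] (f : R →+* S) (c t : R) (m : ℕ) :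
    f (poch c t m) = poch (f c) (f t) m := by
  simp [poch, map_prod, map_sub, map_mul, map_natCast]

variable {R : Type*} [CommRing R]

lemma poch_X_sub_C (c r : R) (m : ℕ) :
    poch (Polynomial.C c) (Polynomial.X - Polynomial.C r) m
      = ∏ i ∈ range m, (Polynomial.X - Polynomial.C (r + (i : R) * c)) := by
  unfold poch
  refine prod_congr rfl fun i _ => ?_
  rw [map_add, map_mul, map_natCast]
  ring

lemma poch_X_sub_C_monic (c r : R) (m : ℕ) :
    (poch (Polynomial.C c) (Polynomial.X - Polynomial.C r) m).Monic := by
  rw [poch_X_sub_C]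
  exact monic_prod_of_monic _ _ fun i _ => monic_X_sub_C _

lemma poch_X_sub_C_natDegree [Nontrivial R] (c r : R) (m : ℕ) :
    (poch (Polynomial.C c) (Polynomial.X - Polynomial.C r) m).natDegree = m := by
  rw [poch_X_sub_C, Polynomial.natDegree_prod_of_monic _ _ fun i _ => monic_X_sub_C _,
    Finset.sum_congr rfl fun i (_ : i ∈ range m) => natDegree_X_sub_C (r + (i : R) * c)]
  simp

end pochlems

section poly

variable {K : Type*} [Field K] {n : ℕ}

/-- linear factor `X - C (C (e κ))` for `e` an integer -/
noncomputable def linf (n : ℕ) {K : Type*} [Field K] (κ : K) (z : ℤ) :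
    Polynomial (MvPolynomial (Fin n) K) :=
  Polynomial.X - Polynomial.C (MvPolynomial.C ((z : K) * κ))

lemma linf_monic (κ : K) (z : ℤ) : (linf n κ z).Monic := monic_X_sub_C _

lemma linf_natDegree (κ : K) (z : ℤ) : (linf n κ z).natDegree = 1 := natDegree_X_sub_C _

/-- `(t;κ)_m` at `t = X` as a product of `linf`s. -/
lemma poch_X_eq (κ : K) (m : ℕ) :
    poch (Polynomial.C (MvPolynomial.C κ)) Polynomial.X m
      = ∏ j ∈ range m, linf n κ (j : ℤ) := by
  unfold poch linf
  refine prod_congr rfl fun j _ => ?_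
  congr 1
  simp

/-- shifted poch as product of `linf`s -/
lemma poch_shift (κ e : K) (m : ℕ) (z : ℤ) (hz : (z : K) = e) :
    poch (Polynomial.C (MvPolynomial.C κ))
        (Polynomial.X - Polynomial.C (MvPolynomial.C (e * κ))) m
      = ∏ j ∈ range m, linf n κ (z + j) := by
  rw [poch_X_sub_C]
  refine prod_congr rfl fun j _ => ?_
  unfold linf
  congr 1
  rw [← map_natCast (MvPolynomial.C : K →+* MvPolynomial (Fin n) K) j, ← map_mul, ← map_add]
  congr 1
  push_cast [hz]
  ring

end poly

noncomputable def Ffac (n k : ℕ) {K : Type*} [Field K] (κ : K)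
    (zs : Fin n → MvPolynomial (Fin n) K) (c j : Fin n) :
    Polynomial (MvPolynomial (Fin n) K) :=
  if j < c then
    poch (Polynomial.C (MvPolynomial.C κ))
      (Polynomial.X - Polynomial.C (zs j) - Polynomial.C (MvPolynomial.C κ)) k
  else if j = c then
    poch (Polynomial.C (MvPolynomial.C κ))
      (Polynomial.X - Polynomial.C (zs j) - Polynomial.C (MvPolynomial.C κ)) (k - 1)
  else
    poch (Polynomial.C (MvPolynomial.C κ)) (Polynomial.X - Polynomial.C (zs j)) k

lemma Qmap {K : Type*} [Field K] (n k : ℕ) (κ : K) (c : Fin n)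
    (zs : Fin n → MvPolynomial (Fin n) K) :
    (Qpoly n k κ c).map (MvPolynomial.aeval zs).toRingHom = ∏ j, Ffac n k κ zs c j := by
  classical
  have hC : ∀ x : K, (MvPolynomial.aeval zs).toRingHom (MvPolynomial.C x) = MvPolynomial.C x := by
    intro x
    simp [MvPolynomial.algebraMap_eq]
  have hX : ∀ j : Fin n, (MvPolynomial.aeval zs).toRingHom (MvPolynomial.X j : MvPolynomial (Fin n) K) = zs j := by
    intro j
    simp
  -- compute the map of Qpoly
  rw [Qpoly, Polynomial.map_mul, Polynomial.map_mul, Polynomial.map_prod, Polynomial.map_prod]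
  have hpoch : ∀ (A B : Polynomial (MvPolynomial (Fin n) K)),
      (poch A B k).map (MvPolynomial.aeval zs).toRingHom
        = poch (A.map (MvPolynomial.aeval zs).toRingHom)
            (B.map (MvPolynomial.aeval zs).toRingHom) k := by
    intro A B
    rw [← Polynomial.coe_mapRingHom, ringHom_poch]
  have hpoch' : ∀ (A B : Polynomial (MvPolynomial (Fin n) K)),
      (poch A B (k-1)).map (MvPolynomial.aeval zs).toRingHom
        = poch (A.map (MvPolynomial.aeval zs).toRingHom)
            (B.map (MvPolynomial.aeval zs).toRingHom) (k-1) := by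
    intro A B
    rw [← Polynomial.coe_mapRingHom, ringHom_poch]
  simp only [hpoch, hpoch', Polynomial.map_sub, Polynomial.map_C, Polynomial.map_X, hC, hX]
  -- now reorganize the RHS
  rw [← Finset.prod_filter_mul_prod_filter_not univ (· < c) (Ffac n k κ zs c),
      ← Finset.prod_filter_mul_prod_filter_not (univ.filter (fun j => ¬ j < c)) (· = c)
        (Ffac n k κ zs c), Finset.filter_filter, Finset.filter_filter]
  have h1 : Finset.filter (fun j => ¬ j < c ∧ j = c) univ = {c} := by
    ext j
    simp only [Finset.mem_filter, Finset.mem_univ, true_and, Finset.mem_singleton]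
    constructor
    · exact fun h => h.2
    · rintro rfl; exact ⟨lt_irrefl _, rfl⟩
  have h2 : Finset.filter (fun j => ¬ j < c ∧ ¬ j = c) univ = univ.filter (fun j => c < j) := by
    ext j
    simp only [Finset.mem_filter, Finset.mem_univ, true_and]
    constructor
    · rintro ⟨h1', h2'⟩; exact lt_of_le_of_ne (le_of_not_gt h1') (Ne.symm h2')
    · intro h; exact ⟨not_lt_of_gt h, fun e => absurd (e ▸ h) (lt_irrefl _)⟩
  rw [h1, h2, Finset.prod_singleton]
  have e1 : ∀ j ∈ univ.filter (· < c), Ffac n k κ zs c j =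
      poch (Polynomial.C (MvPolynomial.C κ))
        (Polynomial.X - Polynomial.C (zs j) - Polynomial.C (MvPolynomial.C κ)) k := by
    intro j hj
    rw [Finset.mem_filter] at hj
    rw [Ffac, if_pos hj.2]
  have e2 : Ffac n k κ zs c c =
      poch (Polynomial.C (MvPolynomial.C κ))
        (Polynomial.X - Polynomial.C (zs c) - Polynomial.C (MvPolynomial.C κ)) (k - 1) := by
    rw [Ffac, if_neg (lt_irrefl _), if_pos rfl]
  have e3 : ∀ j ∈ univ.filter (fun j => c < j), Ffac n k κ zs c j =
      poch (Polynomial.C (MvPolynomial.C κ)) (Polynomial.X - Polynomial.C (zs j)) k := by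
    intro j hj
    rw [Finset.mem_filter] at hj
    rw [Ffac, if_neg (not_lt_of_gt hj.2), if_neg (fun e => absurd (e ▸ hj.2) (lt_irrefl _))]
  rw [Finset.prod_congr rfl e1, e2, Finset.prod_congr rfl e3, mul_assoc]


/-- Under the special restriction `S_I` (substituting `z_{i_b} = ((b-1)k-1)κ`
for `I = {i_1 < ⋯ < i_a}`), the vector `Q(t,z;κ)` is divisible by the
Pochhammer polynomial `(t;κ)_{ak-1}`, with quotients of `t`-degree `(n-a)k`. -/
theorem restriction_divisible {p : ℕ} [Fact p.Prime] {K : Type*} [Field K] [CharP K p]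
    (n : ℕ) (k : ℕ) (hk : 0 < k) (hkp : k < p) (κ : K) (hκ : κ * (k : K) = -1)
    (a : ℕ) (ha : 0 < a) (i : Fin a → Fin n) (hi : StrictMono i)
    (zs : Fin n → MvPolynomial (Fin n) K)
    (hz1 : ∀ b : Fin a, zs (i b) =
      MvPolynomial.C ((((b : ℕ) * k : ℕ) : K) - 1) * MvPolynomial.C κ)
    (hz2 : ∀ j : Fin n, (∀ b : Fin a, i b ≠ j) → zs j = MvPolynomial.X j) :
    ∃ P : Fin n → Polynomial (MvPolynomial (Fin n) K),
      ∀ c : Fin n,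
        (Qpoly n k κ c).map (MvPolynomial.aeval zs).toRingHom =
          poch (Polynomial.C (MvPolynomial.C κ)) Polynomial.X (a * k - 1) * P c ∧
        (P c).natDegree = (n - a) * k := by
  classical
  set T : Finset (Fin n) := univ.image i with hT
  set s : Fin n → ℕ := fun c => (univ.filter fun b : Fin a => i b < c).card with hsdef
  have hsle : ∀ c, s c ≤ a := fun c =>
    le_trans (Finset.card_filter_le _ _) (by simp)
  have hlt_iff : ∀ (c : Fin n) (b : Fin a), i b < c ↔ (b : ℕ) < s c := by
    intro c b
    constructor
    · intro h
      have hsub : Finset.Iic b ⊆ univ.filter fun b' : Fin a => i b' < c := by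
        intro x hx
        exact Finset.mem_filter.2 ⟨Finset.mem_univ _,
          lt_of_le_of_lt (hi.monotone (Finset.mem_Iic.1 hx)) h⟩
      have := Finset.card_le_card hsub
      rw [Fin.card_Iic] at this
      have : (b : ℕ) + 1 ≤ s c := this
      omega
    · intro h
      by_contra hcon
      have hsub : (univ.filter fun b' : Fin a => i b' < c) ⊆ Finset.Iio b := by
        intro x hx
        rw [Finset.mem_filter] at hx
        rw [Finset.mem_Iio]
        by_contra hxb
        exact hcon (lt_of_le_of_lt (hi.monotone (not_lt.1 hxb)) hx.2)
      have := Finset.card_le_card hsub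
      rw [Fin.card_Iio] at this
      have : s c ≤ (b : ℕ) := this
      omega
  have hb0 : ∀ (c : Fin n) (b : Fin a), i b = c → (b : ℕ) = s c := by
    intro c b hbc
    have hfeq : (univ.filter fun b' : Fin a => i b' < c) = Finset.Iio b := by
      ext b'
      simp only [Finset.mem_filter, Finset.mem_univ, true_and, Finset.mem_Iio, ← hbc,
        hi.lt_iff_lt]
    rw [hsdef]
    simp only [hfeq, Fin.card_Iio]
  -- the core computation
  have hcore : ∀ c : Fin n, ∏ b : Fin a, Ffac n k κ zs c (i b)
      = poch (Polynomial.C (MvPolynomial.C κ)) Polynomial.X (a * k - 1) *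
        (if c ∈ T then 1 else linf n κ ((s c : ℤ) * k - 1)) := by
    intro c
    have hcomp1 : ∀ (b : Fin a) (m : ℕ),
        poch (Polynomial.C (MvPolynomial.C κ))
          (Polynomial.X - Polynomial.C (zs (i b)) - Polynomial.C (MvPolynomial.C κ)) m
        = ∏ j ∈ range m, linf n κ (((b : ℕ) : ℤ) * k + j) := by
      intro b m
      rw [hz1 b, ← map_mul, sub_sub, ← Polynomial.C_add, ← MvPolynomial.C_add,
        show ((((b : ℕ) * k : ℕ) : K) - 1) * κ + κ = (((b : ℕ) * k : ℕ) : K) * κ by ring]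
      exact poch_shift κ _ m (((b : ℕ) : ℤ) * k) (by push_cast; ring)
    have hcomp3 : ∀ b : Fin a,
        poch (Polynomial.C (MvPolynomial.C κ))
          (Polynomial.X - Polynomial.C (zs (i b))) k
        = ∏ j ∈ range k, linf n κ (((b : ℕ) : ℤ) * k - 1 + j) := by
      intro b
      rw [hz1 b, ← map_mul]
      exact poch_shift κ _ k (((b : ℕ) : ℤ) * k - 1) (by push_cast; ring)
    set G : ℕ → Polynomial (MvPolynomial (Fin n) K) := fun m =>
      if m < s c then ∏ j ∈ range k, linf n κ ((m : ℤ) * k + j)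
      else if c ∈ T ∧ m = s c then ∏ j ∈ range (k - 1), linf n κ ((m : ℤ) * k + j)
      else ∏ j ∈ range k, linf n κ ((m : ℤ) * k - 1 + j) with hGdef
    have hFb : ∀ b : Fin a, Ffac n k κ zs c (i b) = G (b : ℕ) := by
      intro b
      simp only [hGdef]
      by_cases hb1 : i b < c
      · rw [if_pos ((hlt_iff c b).1 hb1), Ffac, if_pos hb1]
        exact hcomp1 b k
      · by_cases hb2 : i b = c
        · have hbs := hb0 c b hb2
          have hcT : c ∈ T := by
            rw [hT]; exact Finset.mem_image.2 ⟨b, Finset.mem_univ b, hb2⟩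
          rw [if_neg (by rw [hbs]; exact lt_irrefl _), if_pos ⟨hcT, hbs⟩, Ffac,
            if_neg hb1, if_pos hb2]
          exact hcomp1 b (k - 1)
        · have hnt : ¬ ((b : ℕ) < s c) := fun h => hb1 ((hlt_iff c b).2 h)
          have hnm : ¬ (c ∈ T ∧ (b : ℕ) = s c) := by
            rintro ⟨hcT, hbs⟩
            rw [hT] at hcT
            obtain ⟨b0, -, hb0c⟩ := Finset.mem_image.1 hcT
            have hbv : (b0 : ℕ) = s c := hb0 c b0 hb0c
            have : b0 = b := Fin.ext (by omega)
            exact hb2 (this ▸ hb0c)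
          rw [if_neg hnt, if_neg hnm, Ffac, if_neg hb1, if_neg hb2]
          exact hcomp3 b
    rw [Finset.prod_congr rfl (fun b _ => hFb b), Fin.prod_univ_eq_prod_range G a]
    have hsplit : range a = range (s c + (a - s c)) := by rw [Nat.add_sub_cancel' (hsle c)]
    rw [hsplit, Finset.prod_range_add]
    have hch1 : ∀ m ∈ range (s c), G m = ∏ j ∈ range k, linf n κ ((m : ℤ) * k + j) := by
      intro m hm
      simp only [hGdef]
      rw [if_pos (mem_range.1 hm)]
    rw [Finset.prod_congr rfl hch1]
    by_cases hcT : c ∈ T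
    · have hslt : s c < a := by
        obtain ⟨b0, -, hb0c⟩ := Finset.mem_image.1 (hT ▸ hcT)
        have h1 := hb0 c b0 hb0c
        have h2 := b0.isLt
        omega
      rw [if_pos hcT, mul_one]
      rw [show a - s c = (a - s c - 1) + 1 by omega,
        Finset.prod_range_succ' (fun x => G (s c + x)) (a - s c - 1)]
      have hmid : G (s c + 0) = ∏ j ∈ range (k - 1), linf n κ ((s c : ℤ) * k + j) := by
        simp only [hGdef, Nat.add_zero, lt_self_iff_false, if_false, and_true]
        rw [if_pos hcT]
      have hthird : ∀ x ∈ range (a - s c - 1),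
          G (s c + (x + 1)) = ∏ j ∈ range k, linf n κ (((s c : ℤ) + 1 + x) * k + j - 1) := by
        intro x hx
        simp only [hGdef]
        rw [if_neg (by omega), if_neg (by rintro ⟨-, h⟩; omega)]
        refine Finset.prod_congr rfl fun j _ => ?_
        congr 1
        push_cast
        ring
      rw [hmid, Finset.prod_congr rfl hthird,
        key1 (linf n κ) k a (s c) hk hslt, poch_X_eq]
    · rw [if_neg hcT]
      have hsecond : ∀ x ∈ range (a - s c),
          G (s c + x) = ∏ j ∈ range k, linf n κ (((s c : ℤ) + x) * k + j - 1) := by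
        intro x hx
        simp only [hGdef]
        have hx1 : ¬ (s c + x < s c) := by omega
        have hx2 : ¬ (c ∈ T ∧ s c + x = s c) := by rintro ⟨h, -⟩; exact hcT h
        rw [if_neg hx1, if_neg hx2]
        refine Finset.prod_congr rfl fun j _ => ?_
        congr 1
        push_cast
        ring
      rw [Finset.prod_congr rfl hsecond, key2 (linf n κ) k a (s c) hk ha (hsle c), poch_X_eq]
      exact mul_comm _ _
  -- monicity and degree facts
  have hmonic : ∀ (c j : Fin n), (Ffac n k κ zs c j).Monic := by
    intro c j
    rw [Ffac]
    split_ifs with h1 h2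
    · rw [sub_sub, ← Polynomial.C_add]; exact poch_X_sub_C_monic _ _ _
    · rw [sub_sub, ← Polynomial.C_add]; exact poch_X_sub_C_monic _ _ _
    · exact poch_X_sub_C_monic _ _ _
  have hdegc : ∀ c : Fin n, (Ffac n k κ zs c c).natDegree = k - 1 := by
    intro c
    rw [Ffac, if_neg (lt_irrefl _), if_pos rfl, sub_sub, ← Polynomial.C_add]
    exact poch_X_sub_C_natDegree _ _ _
  have hdeg : ∀ c j : Fin n, j ≠ c → (Ffac n k κ zs c j).natDegree = k := by
    intro c j hne
    by_cases h1 : j < c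
    · rw [Ffac, if_pos h1, sub_sub, ← Polynomial.C_add]
      exact poch_X_sub_C_natDegree _ _ _
    · rw [Ffac, if_neg h1, if_neg hne]
      exact poch_X_sub_C_natDegree _ _ _
  have hTccard : Tᶜ.card = n - a := by
    rw [Finset.card_compl, Fintype.card_fin, hT,
      Finset.card_image_of_injective _ hi.injective, Finset.card_univ, Fintype.card_fin]
  refine ⟨fun c => (if c ∈ T then 1 else linf n κ ((s c : ℤ) * k - 1)) *
      ∏ j ∈ Tᶜ, Ffac n k κ zs c j, fun c => ⟨?_, ?_⟩⟩
  · have himg : ∏ j ∈ T, Ffac n k κ zs c j = ∏ b : Fin a, Ffac n k κ zs c (i b) := by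
      rw [hT]; exact Finset.prod_image fun x _ y _ h => hi.injective h
    rw [Qmap n k κ c zs, ← Finset.prod_mul_prod_compl T (Ffac n k κ zs c), himg, hcore c,
      mul_assoc]
  · have hm1 : (if c ∈ T then 1 else linf n κ ((s c : ℤ) * k - 1)).Monic := by
      split_ifs
      exacts [monic_one, linf_monic κ _]
    have hm2 : (∏ j ∈ Tᶜ, Ffac n k κ zs c j).Monic :=
      monic_prod_of_monic _ _ fun j _ => hmonic c j
    rw [Polynomial.Monic.natDegree_mul hm1 hm2,
      Polynomial.natDegree_prod_of_monic _ _ fun j _ => hmonic c j]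
    by_cases hcT : c ∈ T
    · rw [if_pos hcT, Polynomial.natDegree_one,
        Finset.sum_congr rfl fun j hj =>
          hdeg c j (by rintro rfl; exact (Finset.mem_compl.1 hj) hcT),
        Finset.sum_const, smul_eq_mul, hTccard, zero_add]
    · have hcTc : c ∈ Tᶜ := Finset.mem_compl.2 hcT
      rw [if_neg hcT, linf_natDegree,
        ← Finset.add_sum_erase _ _ hcTc, hdegc c,
        Finset.sum_congr rfl fun j hj => hdeg c j (Finset.ne_of_mem_erase hj),
        Finset.sum_const, smul_eq_mul, Finset.card_erase_of_mem hcTc, hTccard]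
      have h1a : 1 ≤ n - a := by
        have : 0 < Tᶜ.card := Finset.card_pos.2 ⟨c, hcTc⟩
        omega
      obtain ⟨d, hd⟩ : ∃ d, n - a = d + 1 := ⟨n - a - 1, by omega⟩
      rw [hd, show (d + 1) * k = d * k + k by ring, Nat.add_sub_cancel]
      generalize d * k = B
      omega
end
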